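/- The mean number of root edges of a uniform random rooted map with n edges is asymptotic to (2/3)·n: lim_{n→∞} e_n′(1)/(n·m(n)) = 2/3, where e_n′ is the derivative of the polynomial e_n. -/

import Mathlib

open Polynomial Filter

/-!
Write `S n = ∑_{i+j=n} m i * m j`, so that `m (n+1) = S n + (2n+1) m n`. Differentiating the
recursion of `e` at `v = 1` and using `∑_{i+j=n} m i * m (j+1) = S (n+1) - m (n+1)` gives, by
induction, `3 e_n'(1) = m (n+1) - 2 m n`. The theorem is therefore `m (n+1) / (n m n) → 2`, which
follows from `(2n+1) m n ≤ m (n+1) ≤ (2n+6) m n`. The lower bound is read off the recursion. For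
the upper bound, the interior part `∑_{i+j=n-2} m (i+1) * m (j+1)` of `S n` is estimated by
applying the bound inductively to the first factor; the resulting weight `2i+6` is linear, so it
averages to `n+5` over the antidiagonal by the symmetry `i ↔ j`, and the step closes for
`n ≥ 3`.
-/

open Finset Finset.Nat

structure IsMapCount (M : ℕ → ℝ) : Prop where
  zero : M 0 = 1
  succ : ∀ n : ℕ, M (n + 1) = ∑ p ∈ antidiagonal n, M p.1 * M p.2 + (2 * n + 1) * M n

theorem two_mul_sum_antidiagonal_fst_mul {R : Type*} [CommSemiring R] (f : ℕ → R) (n : ℕ) :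
    2 * ∑ p ∈ antidiagonal n, (p.1 : R) * (f p.1 * f p.2) =
      n * ∑ p ∈ antidiagonal n, f p.1 * f p.2 := by
  conv_lhs => rw [two_mul]; enter [2]; rw [← sum_antidiagonal_swap]
  rw [← sum_add_distrib, mul_sum]
  refine sum_congr rfl fun p hp => ?_
  rw [← (mem_antidiagonal.mp hp)]
  push_cast [Prod.fst_swap, Prod.snd_swap]
  ring

namespace IsMapCount

variable {M : ℕ → ℝ}

theorem pos (h : IsMapCount M) (n : ℕ) : 0 < M n := by
  induction n using Nat.strong_induction_on with
  | _ n ih =>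
    cases n with
    | zero => simp [h.zero]
    | succ n =>
      rw [h.succ]
      have hsum : 0 ≤ ∑ p ∈ antidiagonal n, M p.1 * M p.2 := sum_nonneg fun p hp =>
        have := mem_antidiagonal.mp hp
        mul_nonneg (ih p.1 (by omega)).le (ih p.2 (by omega)).le
      have := ih n n.lt_succ_self
      positivity

theorem le_succ (h : IsMapCount M) (n : ℕ) : (2 * n + 1) * M n ≤ M (n + 1) := by
  rw [h.succ]
  have := sum_nonneg fun p (_ : p ∈ antidiagonal n) => (mul_pos (h.pos p.1) (h.pos p.2)).le
  linarith

theorem sum_antidiagonal_succ_mul_succ (h : IsMapCount M) (k : ℕ) :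
    ∑ p ∈ antidiagonal k, M (p.1 + 1) * M (p.2 + 1) = M (k + 3) - (2 * k + 7) * M (k + 2) := by
  have := h.succ (k + 2)
  rw [sum_antidiagonal_succ, sum_antidiagonal_succ'] at this
  simp only [h.zero] at this
  push_cast at this
  linarith

theorem succ_le_of_forall_lt (h : IsMapCount M) {n : ℕ} (hn : 3 ≤ n)
    (ih : ∀ i < n, M (i + 1) ≤ (2 * i + 6) * M i) : M (n + 1) ≤ (2 * n + 6) * M n := by
  obtain ⟨k, rfl⟩ : ∃ k, n = k + 2 := ⟨n - 2, by omega⟩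
  have hinner : ∑ p ∈ antidiagonal k, M (p.1 + 1) * M (p.2 + 1) ≤
      ∑ p ∈ antidiagonal k, (2 * p.1 + 6) * M p.1 * M (p.2 + 1) :=
    sum_le_sum fun p hp => mul_le_mul_of_nonneg_right
      (ih p.1 (by have := mem_antidiagonal.mp hp; omega)) (h.pos _).le
  have hweighted : ∑ p ∈ antidiagonal (k + 1), (2 * p.1 + 6) * M p.1 * M p.2 =
      (2 * (k + 1 : ℕ) + 6) * M (k + 1) +
        ∑ p ∈ antidiagonal k, (2 * p.1 + 6) * M p.1 * M (p.2 + 1) := by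
    rw [sum_antidiagonal_succ']
    simp [h.zero]
  have hsymm := two_mul_sum_antidiagonal_fst_mul M (k + 1)
  have hsplit : ∑ p ∈ antidiagonal (k + 1), (2 * p.1 + 6) * M p.1 * M p.2 =
      2 * ∑ p ∈ antidiagonal (k + 1), (p.1 : ℝ) * (M p.1 * M p.2) +
        6 * ∑ p ∈ antidiagonal (k + 1), M p.1 * M p.2 := by
    simp only [mul_sum, ← sum_add_distrib]
    exact sum_congr rfl fun _ _ => by ring
  have hS := h.succ (k + 1)
  have hT := h.sum_antidiagonal_succ_mul_succ k
  have hprev := ih (k + 1) (by omega)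
  have hMpos := h.pos (k + 1)
  have hk : (1 : ℝ) ≤ k := by exact_mod_cast (by omega : 1 ≤ k)
  push_cast at *
  nlinarith [mul_le_mul_of_nonneg_left hprev (by positivity : (0 : ℝ) ≤ k + 4),
    mul_nonneg (sub_nonneg.2 hk) hMpos.le]

theorem succ_le (h : IsMapCount M) (n : ℕ) : M (n + 1) ≤ (2 * n + 6) * M n := by
  induction n using Nat.strong_induction_on with
  | _ n ih =>
    by_cases hn : 3 ≤ n
    · exact h.succ_le_of_forall_lt hn ih
    · interval_cases n <;> norm_num [h.succ, h.zero, sum_antidiagonal_succ]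

end IsMapCount

structure IsRootEdgePoly (M : ℕ → ℝ) (e : ℕ → ℝ[X]) : Prop where
  zero : e 0 = 1
  succ : ∀ n : ℕ, e (n + 1) =
    C (2 * (n : ℝ) + 1) * X * e n + X * ∑ p ∈ antidiagonal n, C (M p.1) * e p.2

namespace IsRootEdgePoly

variable {M : ℕ → ℝ} {e : ℕ → ℝ[X]}

theorem eval_one (he : IsRootEdgePoly M e) (hM : IsMapCount M) (n : ℕ) : (e n).eval 1 = M n := by
  induction n using Nat.strong_induction_on with
  | _ n ih =>
    cases n with
    | zero => simp [he.zero, hM.zero]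
    | succ n =>
      have hsum : ∑ p ∈ antidiagonal n, M p.1 * (e p.2).eval 1 =
          ∑ p ∈ antidiagonal n, M p.1 * M p.2 :=
        sum_congr rfl fun p hp => by rw [ih p.2 (by have := mem_antidiagonal.mp hp; omega)]
      simp only [he.succ, hM.succ n, eval_add, eval_mul, eval_C, eval_X, eval_finsetSum, one_mul,
        hsum, ih n n.lt_succ_self]
      ring

theorem derivative_eval_one_succ (he : IsRootEdgePoly M e) (hM : IsMapCount M) (n : ℕ) :
    (derivative (e (n + 1))).eval 1 = (2 * n + 1) * (M n + (derivative (e n)).eval 1) +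
      ∑ p ∈ antidiagonal n, M p.1 * (M p.2 + (derivative (e p.2)).eval 1) := by
  simp only [he.succ, derivative_add, derivative_mul, derivative_C, derivative_X, derivative_sum,
    eval_add, eval_mul, eval_C, eval_X, eval_finsetSum, eval_zero, Polynomial.eval_one, zero_mul,
    mul_zero, sum_const_zero, he.eval_one hM, mul_add, sum_add_distrib]
  ring

theorem three_mul_derivative_eval_one (he : IsRootEdgePoly M e) (hM : IsMapCount M) (n : ℕ) :
    3 * (derivative (e n)).eval 1 = M (n + 1) - 2 * M n := by
  induction n using Nat.strong_induction_on with
  | _ n ih =>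
    cases n with
    | zero => norm_num [he.zero, hM.succ, hM.zero]
    | succ n =>
      have hsum : 3 * ∑ p ∈ antidiagonal n, M p.1 * (M p.2 + (derivative (e p.2)).eval 1) =
          ∑ p ∈ antidiagonal n, M p.1 * M p.2 +
            ∑ p ∈ antidiagonal n, M p.1 * M (p.2 + 1) := by
        rw [mul_sum, ← sum_add_distrib]
        refine sum_congr rfl fun p hp => ?_
        linear_combination M p.1 * ih p.2 (by have := mem_antidiagonal.mp hp; omega)
      have hshift := hM.succ (n + 1)
      rw [sum_antidiagonal_succ', hM.zero] at hshift
      have hrec := he.derivative_eval_one_succ hM n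
      have hprev := ih n n.lt_succ_self
      have hMn := hM.succ n
      push_cast at hshift
      linear_combination 3 * hrec + hsum + (2 * (n : ℝ) + 1) * hprev - hshift - hMn

end IsRootEdgePoly

theorem tendsto_succ_div_mul_of_bounds {M : ℕ → ℝ} {c a b : ℝ} (hpos : ∀ n, 0 < M n)
    (hlow : ∀ n : ℕ, (c * n + a) * M n ≤ M (n + 1))
    (hup : ∀ n : ℕ, M (n + 1) ≤ (c * n + b) * M n) :
    Tendsto (fun n : ℕ => M (n + 1) / (n * M n)) atTop (nhds c) := by
  have hlim (d : ℝ) : Tendsto (fun n : ℕ => c + d / n) atTop (nhds c) := by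
    simpa using tendsto_const_nhds.add (tendsto_const_div_atTop_nhds_zero_nat d)
  have hscale (d : ℝ) (n : ℕ) (hn : n ≠ 0) : (c + d / n) * (n * M n) = (c * n + d) * M n := by
    field_simp
  refine tendsto_of_tendsto_of_tendsto_of_le_of_le' (hlim a) (hlim b) ?_ ?_ <;>
    filter_upwards [eventually_ne_atTop 0] with n hn
  · rw [le_div_iff₀ (by positivity [hpos n]), hscale a n hn]
    exact hlow n
  · rw [div_le_iff₀ (by positivity [hpos n]), hscale b n hn]
    exact hup n

theorem root_edges_mean
    (m : ℕ → ℕ) (hm0 : m 0 = 1)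
    (hm : ∀ n : ℕ, m (n + 1) =
      (∑ k ∈ Finset.range (n + 1), m k * m (n - k)) + (2 * (n + 1) - 1) * m n)
    (e : ℕ → Polynomial ℝ) (he0 : e 0 = 1)
    (he : ∀ n : ℕ, e (n + 1) =
      C (2 * ((n : ℝ) + 1) - 1) * X * e n +
        X * ∑ i ∈ Finset.range (n + 1), C ((m i : ℝ)) * e (n - i)) :
    Tendsto (fun n : ℕ => (derivative (e n)).eval 1 / ((n : ℝ) * (m n : ℝ))) atTop
      (nhds (2 / 3)) := by
  have hM : IsMapCount (fun n => (m n : ℝ)) := by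
    refine ⟨by simp [hm0], fun n => ?_⟩
    rw [hm n, sum_antidiagonal_eq_sum_range_succ (fun i j => (m i : ℝ) * m j),
      show 2 * (n + 1) - 1 = 2 * n + 1 by omega]
    push_cast
    rfl
  have hE : IsRootEdgePoly (fun n => (m n : ℝ)) e := by
    refine ⟨he0, fun n => ?_⟩
    rw [he n, sum_antidiagonal_eq_sum_range_succ (fun i j => C (m i : ℝ) * e j),
      show 2 * ((n : ℝ) + 1) - 1 = 2 * n + 1 by ring]
  have hratio := tendsto_succ_div_mul_of_bounds hM.pos hM.le_succ hM.succ_le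
  have hlim := (hratio.sub (tendsto_const_div_atTop_nhds_zero_nat (2 : ℝ))).div_const 3
  rw [show ((2 : ℝ) - 0) / 3 = 2 / 3 by norm_num] at hlim
  refine hlim.congr' ?_
  filter_upwards [eventually_ne_atTop 0] with n hn
  have hmn : (m n : ℝ) ≠ 0 := (hM.pos n).ne'
  field_simp
  linarith [hE.three_mul_derivative_eval_one hM n]
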